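/- Let n ≥ 2. The set RSP_n of restricted signed partitions of [±n] is a submonoid of SP_n, it is generated as a monoid by E_n^× := {ε_{i,j} : i, j ∈ [±n], i < j, j ≠ −i}, and the cardinality of E_n^× is n² − n. -/

import Mathlib

instance setoidCommMonoid (α : Type*) : CommMonoid (Setoid α) where
  mul := (· ⊔ ·)
  one := ⊥
  mul_assoc := sup_assoc
  one_mul := bot_sup_eq
  mul_one := sup_bot_eq
  mul_comm := sup_comm

def muSet {α : Type*} (X : Set α) : Setoid α :=
  Relation.EqvGen.setoid (fun x y => x ∈ X ∧ y ∈ X)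

def mu {α : Type*} (i j : α) : Setoid α := muSet {i, j}

/-- `[±n]`: nonzero integers of absolute value at most `n`, with the order from `ℤ`. -/
abbrev PM (n : ℕ) := {k : ℤ // k ≠ 0 ∧ |k| ≤ (n : ℤ)}

namespace PM

/-- The negation involution `k ↦ -k` on `[±n]`. -/
def neg {n : ℕ} (x : PM n) : PM n :=
  ⟨-x.1, by obtain ⟨h1, h2⟩ := x.2; exact ⟨neg_ne_zero.mpr h1, by rwa [abs_neg]⟩⟩

@[simp] theorem neg_neg {n : ℕ} (x : PM n) : x.neg.neg = x := Subtype.ext (by simp [neg])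

theorem neg_lt_neg {n : ℕ} {x y : PM n} (h : x < y) : y.neg < x.neg := by
  have h' : x.1 < y.1 := Subtype.coe_lt_coe.mpr h
  rw [← Subtype.coe_lt_coe]
  show -y.1 < -x.1
  omega

theorem neg_lt_pos {n : ℕ} {x y : PM n} (hx : 0 < x.1) (hy : 0 < y.1) : x.neg < y := by
  rw [← Subtype.coe_lt_coe]
  show -x.1 < y.1
  omega

theorem pos_ne_neg {n : ℕ} {x y : PM n} (hx : 0 < x.1) (hy : 0 < y.1) : y ≠ x.neg := by
  intro h
  have : y.1 = -x.1 := congrArg Subtype.val h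
  omega

theorem neg_lt_self {n : ℕ} {x : PM n} (hx : 0 < x.1) : x.neg < x := neg_lt_pos hx hx

/-- The absolute value map `x ↦ |x|` from `[±n]` to its positive part. -/
def abs {n : ℕ} (x : PM n) : PM n :=
  ⟨|x.1|, by obtain ⟨h1, h2⟩ := x.2; exact ⟨abs_ne_zero.mpr h1, by rwa [abs_abs]⟩⟩

end PM

/-- Image of a subset of `[±n]` under negation. -/
def negSet {n : ℕ} (K : Set (PM n)) : Set (PM n) := PM.neg '' K

/-- The partition `I⁻` transported along negation: `x ∼ y` in `negPart I` iff `-x ∼ -y` in `I`. -/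
def negPart {n : ℕ} (I : Setoid (PM n)) : Setoid (PM n) := Setoid.comap PM.neg I

/-- A set partition `I` of `[±n]` is *signed* if for every block `K` of `I` the set `-K` is
also a block; equivalently, `x ∼ y ↔ -x ∼ -y` for all `x, y`. -/
def IsSigned {n : ℕ} (I : Setoid (PM n)) : Prop :=
  ∀ x y : PM n, I x y ↔ I (PM.neg x) (PM.neg y)

/-- A *zero block* of a partition `I` is a block `K` with `-K = K`. -/
def IsZeroBlock {n : ℕ} (I : Setoid (PM n)) (K : Set (PM n)) : Prop :=
  K ∈ I.classes ∧ negSet K = K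

/-- A `Bₙ`-partition: a signed partition of `[±n]` with at most one zero block. -/
def IsBPart {n : ℕ} (I : Setoid (PM n)) : Prop :=
  IsSigned I ∧ Set.Subsingleton {K | IsZeroBlock I K}

/-- A *restricted* signed partition: all its zero blocks have more than two elements. -/
def IsRestricted {n : ℕ} (I : Setoid (PM n)) : Prop :=
  IsSigned I ∧ ∀ K : Set (PM n), IsZeroBlock I K → 2 < K.ncard

/-- A `Dₙ`-partition: a `Bₙ`-partition whose zero block (if present) has more than two
elements. -/
def IsDPart {n : ℕ} (I : Setoid (PM n)) : Prop :=
  IsBPart I ∧ ∀ K : Set (PM n), IsZeroBlock I K → 2 < K.ncard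

/-- For `i < j` in `[±n]`, the signed partition `ε_{i,j} = μ_{-j,-i} ⊔ μ_{i,j}`. -/
def eps {n : ℕ} (i j : PM n) : Setoid (PM n) := mu (PM.neg j) (PM.neg i) ⊔ mu i j

/-- The generating set `Eₙ^× = {ε_{i,j} : i, j ∈ [±n], i < j, j ≠ -i}`. -/
def Enx (n : ℕ) : Set (Setoid (PM n)) :=
  {x | ∃ i j : PM n, i < j ∧ j ≠ PM.neg i ∧ x = eps i j}

/-! Signedness is preserved by joins, and so is the condition that every class containing
some `x` together with `-x` has more than two elements; `μ_{a,b}` satisfies the latter when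
`b ≠ -a`, hence every `ε_{i,j}` with `j ≠ -i` is restricted. Conversely, a restricted `I` is the
join of the `ε_{x,y} ≤ I` with `x ∼ y`, `y ≠ ±x`: a relation `x ∼ -x` factors through a third
element of the class of `x`. Every element of `Eₙ^×` is `ε_{i,j}` for exactly one pair
with `|i| < j`, and `(i, j) ↦ (i, j)` for `i > 0`, `(j, -i)` for `i < 0` matches these pairs with
the ordered pairs of distinct elements of `{1, …, n}`. -/

namespace PM

variable {n : ℕ}

@[simp] theorem val_neg (x : PM n) : x.neg.1 = -x.1 := rfl

theorem neg_injective : Function.Injective (neg (n := n)) :=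
  Function.LeftInverse.injective neg_neg

theorem neg_ne_self (x : PM n) : x.neg ≠ x := fun h =>
  x.2.1 <| by have : -x.1 = x.1 := congrArg Subtype.val h; omega

instance : Finite (PM n) :=
  (Set.finite_Icc (-(n : ℤ)) n).subset (fun _ hk => abs_le.mp hk.2) |>.to_subtype

end PM

section Mu

variable {α : Type*}

instance Setoid.finite [Finite α] : Finite (Setoid α) :=
  Finite.of_injective (fun r : Setoid α => (r : α → α → Prop)) fun _ _ h =>
    Setoid.ext fun a b => iff_of_eq (congrFun₂ h a b)

theorem muSet_rel_iff {X : Set α} {x y : α} : muSet X x y ↔ x = y ∨ x ∈ X ∧ y ∈ X := by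
  refine ⟨fun h => ?_, ?_⟩
  · induction h with
    | rel _ _ h => exact .inr h
    | refl => exact .inl rfl
    | symm _ _ _ ih => grind
    | trans _ _ _ _ _ ih₁ ih₂ => grind
  · rintro (rfl | h)
    exacts [(muSet X).refl _, .rel _ _ h]

theorem mu_le_iff {a b : α} {r : Setoid α} : mu a b ≤ r ↔ r a b := by
  refine ⟨fun h => h (muSet_rel_iff.2 (.inr ⟨.inl rfl, .inr rfl⟩)), fun h => Setoid.eqvGen_le ?_⟩
  rintro x y ⟨rfl | rfl, rfl | rfl⟩
  exacts [r.refl _, h, r.symm h, r.refl _]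

theorem mu_comm (a b : α) : mu a b = mu b a := by
  rw [mu, mu, Set.pair_comm]

theorem muSet_sup_muSet_rel_iff {X Y : Set α} (hXY : Disjoint X Y) {x y : α} :
    (muSet X ⊔ muSet Y) x y ↔ x = y ∨ (x ∈ X ∧ y ∈ X) ∨ (x ∈ Y ∧ y ∈ Y) := by
  have hX := Set.disjoint_left.1 hXY
  refine ⟨fun h => ?_, ?_⟩
  · rw [Setoid.sup_eq_eqvGen] at h
    induction h with
    | rel _ _ h => simp only [muSet_rel_iff] at h; tauto
    | refl => exact .inl rfl
    | symm _ _ _ ih => tauto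
    | trans _ _ _ _ _ ih₁ ih₂ => grind
  · rintro (rfl | h | h)
    · exact Setoid.refl' _ _
    · exact le_sup_left (a := muSet X) (muSet_rel_iff.2 (.inr h))
    · exact le_sup_right (a := muSet X) (muSet_rel_iff.2 (.inr h))

end Mu

section Signed

variable {n : ℕ}

theorem negPart_rel {I : Setoid (PM n)} {x y : PM n} : negPart I x y ↔ I x.neg y.neg := Iff.rfl

theorem isSigned_of_le_negPart {I : Setoid (PM n)} (h : I ≤ negPart I) : IsSigned I :=
  fun x y => ⟨@h x y, fun hxy => by simpa using negPart_rel.1 (h hxy)⟩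

theorem IsSigned.sup {I J : Setoid (PM n)} (hI : IsSigned I) (hJ : IsSigned J) :
    IsSigned (I ⊔ J) :=
  isSigned_of_le_negPart <| sup_le
    (fun x y h => le_sup_left (a := I) ((hI x y).1 h))
    (fun x y h => le_sup_right (a := I) ((hJ x y).1 h))

theorem isSigned_bot : IsSigned (⊥ : Setoid (PM n)) :=
  fun _ _ => PM.neg_injective.eq_iff.symm

theorem eps_le_iff {i j : PM n} {I : Setoid (PM n)} :
    eps i j ≤ I ↔ I j.neg i.neg ∧ I i j := by
  rw [eps, sup_le_iff, mu_le_iff, mu_le_iff]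

theorem eps_rel_neg (i j : PM n) : eps i j j.neg i.neg := (eps_le_iff.1 le_rfl).1

theorem eps_rel (i j : PM n) : eps i j i j := (eps_le_iff.1 le_rfl).2

theorem isSigned_eps (i j : PM n) : IsSigned (eps i j) :=
  isSigned_of_le_negPart <| eps_le_iff.2
    ⟨negPart_rel.2 <| by simpa using (eps i j).symm' (eps_rel i j),
      negPart_rel.2 <| (eps i j).symm' (eps_rel_neg i j)⟩

theorem IsSigned.eps_le {I : Setoid (PM n)} (hI : IsSigned I) {i j : PM n} (h : I i j) :
    eps i j ≤ I :=
  eps_le_iff.2 ⟨I.symm' ((hI i j).1 h), h⟩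

end Signed

section Restricted

variable {n : ℕ}

/-- The restriction condition without signedness: unlike zero blocks, it is stable under joins
of arbitrary partitions. -/
def HasLargeZeroClasses (I : Setoid (PM n)) : Prop :=
  ∀ x, I x x.neg → 2 < {y | I y x}.ncard

theorem isRestricted_iff {I : Setoid (PM n)} :
    IsRestricted I ↔ IsSigned I ∧ HasLargeZeroClasses I := by
  refine and_congr_right fun hI => ⟨fun h x hx => h _ ⟨⟨x, rfl⟩, ?_⟩, ?_⟩
  · ext z
    refine ⟨?_, fun hz => ⟨z.neg, ?_, z.neg_neg⟩⟩
    · rintro ⟨w, hw, rfl⟩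
      exact I.trans' ((hI _ _).1 hw) (I.symm' hx)
    · exact I.trans' ((hI _ _).1 hz) (I.symm' hx)
  · rintro h K ⟨⟨x, rfl⟩, hneg⟩
    refine h x (I.symm' ?_)
    have : x.neg ∈ negSet {y | I y x} := ⟨x, I.refl' x, rfl⟩
    rwa [hneg] at this

theorem HasLargeZeroClasses.sup {I J : Setoid (PM n)} (hI : HasLargeZeroClasses I)
    (hJ : HasLargeZeroClasses J) : HasLargeZeroClasses (I ⊔ J) := by
  intro x hx
  by_contra! hsmall
  have hK : {y | (I ⊔ J) y x} = {x, x.neg} := by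
    refine (Set.eq_of_subset_of_ncard_le ?_ ?_ (Set.toFinite _)).symm
    · rintro y (rfl | rfl)
      exacts [(I ⊔ J).refl' y, (I ⊔ J).symm' hx]
    · exact hsmall.trans (Set.ncard_pair (PM.neg_ne_self x).symm).ge
  -- the class of `x` under `I` or `J` lies in `{x, -x}`, so it is too small to contain `-x`
  have hfix : ∀ L ≤ I ⊔ J, HasLargeZeroClasses L → ∀ a, L a x → a = x := by
    intro L hL hL' a ha
    have ha' : a ∈ ({x, x.neg} : Set (PM n)) := hK ▸ hL ha
    rcases ha' with rfl | rfl
    · rfl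
    · exact absurd hsmall <| not_le.2 <| (hL' x (L.symm' ha)).trans_le <|
        Set.ncard_le_ncard (t := {y | (I ⊔ J) y x}) (fun y hy => hL hy) (Set.toFinite _)
  -- hence `I` and `J` both refine a partition separating `x` from `-x`
  let S : Setoid (PM n) := (I ⊔ J) ⊓ Setoid.ker (· = x)
  have hS : ∀ L ≤ I ⊔ J, HasLargeZeroClasses L → L ≤ S := fun L hL hL' a b hab =>
    Setoid.inf_iff_and.2 ⟨hL hab, Setoid.ker_def.2 <| eq_iff_iff.2
      ⟨by rintro rfl; exact hfix L hL hL' b (L.symm' hab),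
        by rintro rfl; exact hfix L hL hL' a hab⟩⟩
  have hxS := sup_le (hS I le_sup_left hI) (hS J le_sup_right hJ) hx
  exact PM.neg_ne_self x (by simpa using Setoid.ker_def.1 (Setoid.inf_iff_and.1 hxS).2)

theorem hasLargeZeroClasses_bot : HasLargeZeroClasses (⊥ : Setoid (PM n)) := by
  intro x hx
  rw [Setoid.bot_def] at hx
  exact absurd hx (PM.neg_ne_self x).symm

theorem hasLargeZeroClasses_mu {a b : PM n} (h : b ≠ a.neg) : HasLargeZeroClasses (mu a b) := by
  intro x hx
  exfalso
  have := x.2.1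
  rw [mu, muSet_rel_iff] at hx
  simp only [ne_eq, Set.mem_insert_iff, Set.mem_singleton_iff, Subtype.ext_iff,
    PM.val_neg] at hx h
  omega

theorem isRestricted_bot : IsRestricted (⊥ : Setoid (PM n)) :=
  isRestricted_iff.2 ⟨isSigned_bot, hasLargeZeroClasses_bot⟩

theorem IsRestricted.sup {I J : Setoid (PM n)} (hI : IsRestricted I) (hJ : IsRestricted J) :
    IsRestricted (I ⊔ J) := by
  rw [isRestricted_iff] at *
  exact ⟨hI.1.sup hJ.1, hI.2.sup hJ.2⟩

theorem isRestricted_eps {i j : PM n} (h : j ≠ i.neg) : IsRestricted (eps i j) :=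
  isRestricted_iff.2 ⟨isSigned_eps i j,
    (hasLargeZeroClasses_mu (by rw [PM.neg_neg]; exact h.symm)).sup (hasLargeZeroClasses_mu h)⟩

end Restricted

section Generation

variable {n : ℕ}

theorem eps_comm (i j : PM n) : eps i j = eps j i := by
  rw [eps, eps, mu_comm j.neg, mu_comm j]

theorem eps_neg_neg (i j : PM n) : eps j.neg i.neg = eps i j := by
  rw [eps, eps, PM.neg_neg, PM.neg_neg, sup_comm]

theorem eps_mem_Enx {i j : PM n} (hij : i ≠ j) (h : j ≠ i.neg) : eps i j ∈ Enx n := by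
  rcases hij.lt_or_gt with hlt | hgt
  · exact ⟨i, j, hlt, h, rfl⟩
  · refine ⟨j, i, hgt, fun h' => h ?_, eps_comm i j⟩
    rw [h', PM.neg_neg]

theorem IsRestricted.eq_sSup_Enx_le {I : Setoid (PM n)} (hI : IsRestricted I) :
    I = sSup {e ∈ Enx n | e ≤ I} := by
  obtain ⟨hs, hl⟩ := isRestricted_iff.1 hI
  set E := sSup {e ∈ Enx n | e ≤ I}
  have hgen : ∀ a b, I a b → a ≠ b → b ≠ a.neg → E a b := fun a b hab hne hneg =>
    le_sSup (s := {e ∈ Enx n | e ≤ I}) ⟨eps_mem_Enx hne hneg, hs.eps_le hab⟩ (eps_rel a b)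
  refine le_antisymm (fun x y hxy => ?_) (sSup_le fun e he => he.2)
  by_cases hxy' : x = y
  · exact hxy' ▸ E.refl' x
  by_cases hneg : y = x.neg
  · subst hneg
    obtain ⟨z, hz, hzx⟩ := Set.exists_mem_notMem_of_ncard_lt_ncard
      ((Set.ncard_pair (PM.neg_ne_self x).symm).trans_lt (hl x hxy))
    simp only [Set.mem_insert_iff, Set.mem_singleton_iff, not_or] at hzx
    exact E.trans' (hgen x z (I.symm' hz) (Ne.symm hzx.1) hzx.2)
      (hgen z x.neg (I.trans' hz hxy) hzx.2 fun h => hzx.1 (PM.neg_injective h).symm)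
  · exact hgen x y hxy hxy' hneg

/-- `RSPₙ` -/
def restrictedSubmonoid (n : ℕ) : Submonoid (Setoid (PM n)) where
  carrier := {I | IsRestricted I}
  one_mem' := isRestricted_bot
  mul_mem' := IsRestricted.sup

theorem closure_Enx_eq : Submonoid.closure (Enx n) = restrictedSubmonoid n := by
  refine le_antisymm (Submonoid.closure_le.2 ?_) fun I hI => ?_
  · rintro _ ⟨i, j, -, h, rfl⟩
    exact isRestricted_eps h
  · rw [IsRestricted.eq_sSup_Enx_le hI]
    exact SupClosed.sSup_mem (fun a ha b hb => mul_mem ha hb) (Set.toFinite _) (one_mem _)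
      fun e he => Submonoid.subset_closure he.1

end Generation

section Count

variable {n : ℕ}

theorem eps_rel_iff {i j : PM n} (h : j ≠ i.neg) {x y : PM n} :
    eps i j x y ↔ x = y ∨
      (x ∈ ({j.neg, i.neg} : Set (PM n)) ∧ y ∈ ({j.neg, i.neg} : Set (PM n))) ∨
      (x ∈ ({i, j} : Set (PM n)) ∧ y ∈ ({i, j} : Set (PM n))) := by
  refine muSet_sup_muSet_rel_iff (Set.disjoint_left.2 fun z hz hz' => ?_)
  have := z.2.1
  simp only [ne_eq, Set.mem_insert_iff, Set.mem_singleton_iff, Subtype.ext_iff, PM.val_neg]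
    at hz hz' h
  omega

def canonicalPairs (n : ℕ) : Set (PM n × PM n) := {p | |p.1.1| < p.2.1}

theorem mem_canonicalPairs {i j : PM n} : (i, j) ∈ canonicalPairs n ↔ -j.1 < i.1 ∧ i.1 < j.1 :=
  show |i.1| < j.1 ↔ _ from abs_lt

theorem Enx_eq_image : Enx n = (fun p => eps p.1 p.2) '' canonicalPairs n := by
  ext e
  constructor
  · rintro ⟨i, j, hlt, hne, rfl⟩
    rw [← Subtype.coe_lt_coe] at hlt
    simp only [ne_eq, Subtype.ext_iff, PM.val_neg] at hne
    by_cases hc : -i.1 < j.1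
    · exact ⟨(i, j), mem_canonicalPairs.2 ⟨by omega, hlt⟩, rfl⟩
    · refine ⟨(j.neg, i.neg), mem_canonicalPairs.2 ?_, eps_neg_neg i j⟩
      simp only [PM.val_neg]
      omega
  · rintro ⟨⟨i, j⟩, hp, rfl⟩
    obtain ⟨h₁, h₂⟩ := mem_canonicalPairs.1 hp
    refine ⟨i, j, Subtype.coe_lt_coe.1 (by omega), fun h => ?_, rfl⟩
    simp only [Subtype.ext_iff, PM.val_neg] at h
    omega

theorem injOn_eps_canonicalPairs : Set.InjOn (fun p => eps p.1 p.2) (canonicalPairs n) := by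
  rintro ⟨i, j⟩ hp ⟨i', j'⟩ hq (h : eps i j = eps i' j')
  have hrel : eps i' j' i j := h ▸ eps_rel i j
  simp only [mem_canonicalPairs] at hp hq
  rw [eps_rel_iff (by simp only [ne_eq, Subtype.ext_iff, PM.val_neg]; omega)] at hrel
  simp only [Set.mem_insert_iff, Set.mem_singleton_iff, Subtype.ext_iff, PM.val_neg] at hrel
  simp only [Prod.ext_iff, Subtype.ext_iff]
  omega

theorem ncard_canonicalPairs : (canonicalPairs n).ncard = n ^ 2 - n := by
  let f : PM n × PM n → ℤ × ℤ := fun p => if 0 < p.1.1 then (p.1.1, p.2.1) else (p.2.1, -p.1.1)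
  have hinj : Set.InjOn f (canonicalPairs n) := by
    rintro ⟨i, j⟩ hp ⟨i', j'⟩ hq h
    simp only [mem_canonicalPairs] at hp hq
    have := i.2.1
    have := i'.2.1
    simp only [f] at h
    simp only [Prod.ext_iff, Subtype.ext_iff]
    split_ifs at h <;> simp only [Prod.mk.injEq] at h <;> omega
  have himage : f '' canonicalPairs n = ((Finset.Icc (1 : ℤ) n).offDiag : Set (ℤ × ℤ)) := by
    ext ⟨a, b⟩
    simp only [Finset.coe_offDiag, Set.mem_offDiag, Finset.mem_coe, Finset.mem_Icc]
    constructor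
    · rintro ⟨⟨i, j⟩, hp, h⟩
      simp only [mem_canonicalPairs] at hp
      have := i.2.1
      have := abs_le.1 j.2.2
      simp only [f] at h
      split_ifs at h <;> simp only [Prod.mk.injEq] at h <;> omega
    · rintro ⟨⟨ha, ha'⟩, ⟨hb, hb'⟩, hab⟩
      rcases hab.lt_or_gt with hlt | hgt
      · refine ⟨(⟨a, by omega, abs_le.2 ⟨by omega, ha'⟩⟩, ⟨b, by omega, abs_le.2 ⟨by omega, hb'⟩⟩),
          mem_canonicalPairs.2 ⟨by dsimp only; omega, hlt⟩, ?_⟩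
        simp [f, show 0 < a by omega]
      · refine ⟨(⟨-b, by omega, abs_le.2 ⟨by omega, by omega⟩⟩,
          ⟨a, by omega, abs_le.2 ⟨by omega, ha'⟩⟩),
          mem_canonicalPairs.2 ⟨by dsimp only; omega, by dsimp only; omega⟩, ?_⟩
        simp [f, show ¬ b < 0 by omega]
  rw [← hinj.ncard_image, himage, Set.ncard_coe_finset, Finset.offDiag_card, Int.card_Icc]
  simp [sq]

theorem ncard_Enx : (Enx n).ncard = n ^ 2 - n := by
  rw [Enx_eq_image, injOn_eps_canonicalPairs.ncard_image, ncard_canonicalPairs]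

end Count

theorem RSPn_submonoid_generated_by_Enx_general (n : ℕ) :
    IsRestricted (⊥ : Setoid (PM n)) ∧
    (∀ I J : Setoid (PM n), IsRestricted I → IsRestricted J → IsRestricted (I ⊔ J)) ∧
    (Submonoid.closure (Enx n) : Set (Setoid (PM n))) = {I | IsRestricted I} ∧
    (Enx n).ncard = n ^ 2 - n :=
  ⟨isRestricted_bot, fun _ _ => IsRestricted.sup, congrArg SetLike.coe closure_Enx_eq, ncard_Enx⟩

/-- The set `RSPₙ` of restricted signed partitions of `[±n]` is a
submonoid of `SPₙ` (it contains `⊥` and is closed under joins), it is generated as a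
monoid by `Eₙ^× = {ε_{i,j} : i < j, j ≠ -i}`, and `|Eₙ^×| = n² - n`. -/
theorem RSPn_submonoid_generated_by_Enx (n : ℕ) (hn : 2 ≤ n) :
    IsRestricted (⊥ : Setoid (PM n)) ∧
    (∀ I J : Setoid (PM n), IsRestricted I → IsRestricted J → IsRestricted (I ⊔ J)) ∧
    (Submonoid.closure (Enx n) : Set (Setoid (PM n))) = {I | IsRestricted I} ∧
    (Enx n).ncard = n ^ 2 - n :=
  RSPn_submonoid_generated_by_Enx_general n
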